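/- arXiv:0809.3061 — 2 statements merged into one kernel-verified Lean document; each statement's English description precedes it below -/
import Mathlib

section
/- For every w ∈ 𝕋, Σ_{z ∈ R^{−1}(w)} R(z)/(z R′(z)) = 1, where R^{−1}(w) is the set of the n distinct solutions in 𝕋 of R(z) = w; that is, the transfer operator 𝓛_R satisfies 𝓛_R(1) = 1. -/
/-!
Clearing denominators, `R z = w` becomes `F z = 0` for the polynomial `F = X P - w Q`, where
`R = X P / Q`; `F` has degree `n` and leading coefficient `λ`, and at its roots
`R / (z R') = P / F'`. Each Möbius factor of `R` has modulus `< 1` inside the disc and `> 1`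
outside, so all roots lie on the circle, where `z R' / R = 1 + ∑ (1 - |aₖ|²) / |z - aₖ|² > 0`;
hence the roots are simple. Lagrange interpolation then gives
`∑_{F z = 0} P z / F' z = (coefficient of Xⁿ⁻¹ in P) / λ = 1`.
-/

open Polynomial Finset ComplexConjugate

namespace Complex

theorem norm_one_sub_conj_mul_sq_sub_norm_sub_sq (a z : ℂ) :
    ‖1 - conj a * z‖ ^ 2 - ‖z - a‖ ^ 2 = (1 - ‖z‖ ^ 2) * (1 - ‖a‖ ^ 2) := by
  simp only [Complex.sq_norm, normSq_apply, sub_re, sub_im, mul_re, mul_im, one_re, one_im,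
    conj_re, conj_im]
  ring

theorem norm_sub_lt_norm_one_sub_conj_mul {a z : ℂ} (ha : ‖a‖ < 1) (hz : ‖z‖ < 1) :
    ‖z - a‖ < ‖1 - conj a * z‖ := by
  have := norm_one_sub_conj_mul_sq_sub_norm_sub_sq a z
  have : 0 < (1 - ‖z‖ ^ 2) * (1 - ‖a‖ ^ 2) := by
    apply mul_pos <;> nlinarith [norm_nonneg a, norm_nonneg z]
  exact (sq_lt_sq₀ (norm_nonneg _) (norm_nonneg _)).mp (by linarith)

theorem norm_one_sub_conj_mul_lt_norm_sub {a z : ℂ} (ha : ‖a‖ < 1) (hz : 1 < ‖z‖) :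
    ‖1 - conj a * z‖ < ‖z - a‖ := by
  have := norm_one_sub_conj_mul_sq_sub_norm_sub_sq a z
  have : (1 - ‖z‖ ^ 2) * (1 - ‖a‖ ^ 2) < 0 := by
    apply mul_neg_of_neg_of_pos <;> nlinarith [norm_nonneg a, norm_nonneg z]
  exact (sq_lt_sq₀ (norm_nonneg _) (norm_nonneg _)).mp (by linarith)

theorem div_sub_add_mul_conj_div_one_sub_conj_mul {a z : ℂ} (hz : ‖z‖ = 1) :
    z / (z - a) + z * conj a / (1 - conj a * z) = ((1 - ‖a‖ ^ 2) / ‖z - a‖ ^ 2 : ℝ) := by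
  rcases eq_or_ne z a with rfl | hza
  · simp [conj_mul', hz]
  replace hza := sub_ne_zero.mpr hza
  have hz0 : z ≠ 0 := by rintro rfl; simp at hz
  have hzz : z * conj z = 1 := by rw [mul_conj', hz]; norm_num
  have hden : 1 - conj a * z = z * conj (z - a) := by rw [map_sub, mul_sub, hzz]; ring
  have hza' : conj (z - a) ≠ 0 := (_root_.map_ne_zero _).mpr hza
  rw [hden]
  push_cast
  rw [← mul_conj', ← mul_conj']
  field_simp
  rw [map_sub]
  linear_combination hzz

end Complex

namespace Polynomial

variable {K : Type*} [Field K]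

theorem nodup_roots_of_eval_derivative_ne_zero {f : K[X]}
    (hf : ∀ x ∈ f.roots, f.derivative.eval x ≠ 0) : f.roots.Nodup := by
  classical
  rcases eq_or_ne f 0 with rfl | hf0
  · simp
  rw [Multiset.nodup_iff_count_le_one]
  intro x
  rw [count_roots, ← not_lt, one_lt_rootMultiplicity_iff_isRoot hf0]
  exact fun ⟨hx, hx'⟩ => hf x ((mem_roots hf0).mpr hx) hx'

theorem sum_roots_eval_div_eval_derivative [DecidableEq K] {f p : K[X]} (hf : f.Splits)
    (hnodup : f.roots.Nodup) (hp : p.degree < f.natDegree) :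
    ∑ x ∈ f.roots.toFinset, p.eval x / f.derivative.eval x =
      p.coeff (f.natDegree - 1) / f.leadingCoeff := by
  set s := f.roots.toFinset
  have hs : s.val = f.roots := by rw [Multiset.toFinset_val, hnodup.dedup]
  have hcard : #s = f.natDegree := by
    rw [Multiset.toFinset_card_of_nodup hnodup, ← hf.natDegree_eq_card_roots]
  have hderiv : ∀ x ∈ s, f.derivative.eval x = f.leadingCoeff * ∏ y ∈ s.erase x, (x - y) := by
    intro x hx
    conv_lhs => rw [hf.eq_prod_roots]
    rw [derivative_C_mul, eval_C_mul, eval_multiset_prod_X_sub_C_derivative (hs ▸ hx.out),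
      ← hs, ← erase_val, prod_eq_multiset_prod]
  rw [← hcard, Lagrange.coeff_eq_sum (v := id) Function.injective_id.injOn (hcard ▸ hp),
    sum_div]
  refine sum_congr rfl fun x hx => ?_
  rw [hderiv x hx, div_mul_eq_div_div_swap]
  rfl

end Polynomial

variable {ι : Type*} (lam : ℂ) (s : Finset ι) (a : ι → ℂ)

noncomputable def blaschke (z : ℂ) : ℂ := lam * z * ∏ i ∈ s, (z - a i) / (1 - conj (a i) * z)

noncomputable def blaschkeNum : ℂ[X] := C lam * Lagrange.nodal s a

noncomputable def blaschkeDen : ℂ[X] := ∏ i ∈ s, (1 - C (conj (a i)) * X)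

/-- The equation `blaschke lam s a z = w` with its denominator cleared. -/
noncomputable def blaschkeLevel (w : ℂ) : ℂ[X] :=
  X * blaschkeNum lam s a - C w * blaschkeDen s a

variable {lam s a}

theorem eval_blaschkeNum (z : ℂ) :
    (blaschkeNum lam s a).eval z = lam * ∏ i ∈ s, (z - a i) := by
  rw [blaschkeNum, eval_C_mul, Lagrange.eval_nodal]

theorem eval_blaschkeDen (z : ℂ) :
    (blaschkeDen s a).eval z = ∏ i ∈ s, (1 - conj (a i) * z) := by
  simp [blaschkeDen, eval_prod]

theorem blaschke_eq_div (z : ℂ) :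
    blaschke lam s a z = z * (blaschkeNum lam s a).eval z / (blaschkeDen s a).eval z := by
  rw [blaschke, eval_blaschkeNum, eval_blaschkeDen, prod_div_distrib]
  ring

theorem natDegree_blaschkeNum (hlam : lam ≠ 0) : (blaschkeNum lam s a).natDegree = #s := by
  rw [blaschkeNum, natDegree_C_mul hlam, Lagrange.natDegree_nodal]

theorem leadingCoeff_blaschkeNum : (blaschkeNum lam s a).leadingCoeff = lam := by
  rw [blaschkeNum, leadingCoeff_mul, leadingCoeff_C, Lagrange.nodal_monic.leadingCoeff, mul_one]

theorem natDegree_blaschkeDen_le : (blaschkeDen s a).natDegree ≤ #s := by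
  refine (natDegree_prod_le _ _).trans ((sum_le_card_nsmul _ _ 1 fun i _ => ?_).trans (by simp))
  exact (natDegree_sub_le _ _).trans (by simpa using natDegree_C_mul_le (conj (a i)) X)

theorem blaschkeNum_ne_zero (hlam : lam ≠ 0) : blaschkeNum lam s a ≠ 0 :=
  mul_ne_zero (C_ne_zero.mpr hlam) Lagrange.nodal_monic.ne_zero

theorem natDegree_C_mul_blaschkeDen_lt (hlam : lam ≠ 0) (w : ℂ) :
    (C w * blaschkeDen s a).natDegree < (X * blaschkeNum lam s a).natDegree := by
  rw [natDegree_X_mul (blaschkeNum_ne_zero hlam), natDegree_blaschkeNum hlam]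
  exact Nat.lt_succ_of_le ((natDegree_C_mul_le _ _).trans natDegree_blaschkeDen_le)

theorem natDegree_blaschkeLevel (hlam : lam ≠ 0) (w : ℂ) :
    (blaschkeLevel lam s a w).natDegree = #s + 1 := by
  rw [blaschkeLevel,
    natDegree_sub_eq_left_of_natDegree_lt (natDegree_C_mul_blaschkeDen_lt hlam w),
    natDegree_X_mul (blaschkeNum_ne_zero hlam), natDegree_blaschkeNum hlam]

theorem leadingCoeff_blaschkeLevel (hlam : lam ≠ 0) (w : ℂ) :
    (blaschkeLevel lam s a w).leadingCoeff = lam := by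
  rw [blaschkeLevel, leadingCoeff_sub_of_degree_lt
    (degree_lt_degree (natDegree_C_mul_blaschkeDen_lt hlam w)), leadingCoeff_mul, leadingCoeff_X,
    one_mul, leadingCoeff_blaschkeNum]

theorem eval_blaschkeDen_ne_zero_of_blaschke_ne_zero {z : ℂ} (h : blaschke lam s a z ≠ 0) :
    (blaschkeDen s a).eval z ≠ 0 :=
  fun h0 => h (by rw [blaschke_eq_div, h0, div_zero])

theorem one_lt_norm_of_eval_blaschkeDen_eq_zero (ha : ∀ i ∈ s, ‖a i‖ < 1) {z : ℂ}
    (h : (blaschkeDen s a).eval z = 0) : 1 < ‖z‖ := by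
  rw [eval_blaschkeDen, prod_eq_zero_iff] at h
  obtain ⟨i, hi, hz⟩ := h
  have : ‖a i‖ * ‖z‖ = 1 := by
    rw [← RCLike.norm_conj (a i), ← norm_mul, ← sub_eq_zero.mp hz, norm_one]
  nlinarith [ha i hi, norm_nonneg (a i)]

theorem eval_blaschkeNum_ne_zero (ha : ∀ i ∈ s, ‖a i‖ < 1) (hlam : lam ≠ 0) {z : ℂ}
    (hz : 1 ≤ ‖z‖) : (blaschkeNum lam s a).eval z ≠ 0 := by
  rw [eval_blaschkeNum]
  refine mul_ne_zero hlam (prod_ne_zero_iff.mpr fun i hi h => ?_)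
  rw [sub_eq_zero.mp h] at hz
  exact (ha i hi).not_ge hz

theorem mem_roots_blaschkeLevel_iff (ha : ∀ i ∈ s, ‖a i‖ < 1) (hlam : lam ≠ 0) {w : ℂ}
    (hw : w ≠ 0) {z : ℂ} : z ∈ (blaschkeLevel lam s a w).roots ↔ blaschke lam s a z = w := by
  have hF : blaschkeLevel lam s a w ≠ 0 := fun h => by
    simpa [h] using natDegree_blaschkeLevel (s := s) (a := a) hlam w
  have heval : (blaschkeLevel lam s a w).eval z =
      z * (blaschkeNum lam s a).eval z - w * (blaschkeDen s a).eval z := by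
    simp [blaschkeLevel]
  rw [mem_roots hF, IsRoot, heval]
  constructor
  · intro h
    -- `X * blaschkeNum` and `blaschkeDen` have no common root: their roots lie in and outside the
    -- unit disc respectively
    have hden : (blaschkeDen s a).eval z ≠ 0 := fun h0 => by
      have hz := one_lt_norm_of_eval_blaschkeDen_eq_zero ha h0
      rw [h0, mul_zero, sub_zero] at h
      exact mul_ne_zero (norm_pos_iff.mp (by linarith)) (eval_blaschkeNum_ne_zero ha hlam hz.le) h
    rw [blaschke_eq_div, div_eq_iff hden]
    linear_combination h
  · intro h
    have hden := eval_blaschkeDen_ne_zero_of_blaschke_ne_zero (h ▸ hw)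
    rw [blaschke_eq_div, div_eq_iff hden] at h
    linear_combination h

theorem norm_eq_one_of_norm_blaschke_eq_one (ha : ∀ i ∈ s, ‖a i‖ < 1) (hlam : ‖lam‖ = 1)
    {z : ℂ} (h : ‖blaschke lam s a z‖ = 1) : ‖z‖ = 1 := by
  have hden : ∀ i ∈ s, 0 < ‖1 - conj (a i) * z‖ := by
    have := eval_blaschkeDen_ne_zero_of_blaschke_ne_zero
      (norm_ne_zero_iff.mp (h ▸ one_ne_zero))
    rw [eval_blaschkeDen, prod_ne_zero_iff] at this
    exact fun i hi => norm_pos_iff.mpr (this i hi)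
  have hnorm : ‖z‖ * ∏ i ∈ s, ‖z - a i‖ / ‖1 - conj (a i) * z‖ = 1 := by
    rw [blaschke, norm_mul, norm_mul, hlam, one_mul, norm_prod] at h
    simpa only [norm_div] using h
  rcases lt_trichotomy ‖z‖ 1 with hz | hz | hz
  · have : ∏ i ∈ s, ‖z - a i‖ / ‖1 - conj (a i) * z‖ ≤ 1 :=
      prod_le_one (fun _ _ => by positivity) fun i hi =>
        (div_le_one (hden i hi)).mpr (Complex.norm_sub_lt_norm_one_sub_conj_mul (ha i hi) hz).le
    nlinarith [mul_le_of_le_one_right (norm_nonneg z) this]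
  · exact hz
  · have : 1 ≤ ∏ i ∈ s, ‖z - a i‖ / ‖1 - conj (a i) * z‖ :=
      one_le_prod fun i hi =>
        (one_le_div (hden i hi)).mpr (Complex.norm_one_sub_conj_mul_lt_norm_sub (ha i hi) hz).le
    nlinarith [le_mul_of_one_le_right (norm_nonneg z) this]

theorem logDeriv_div_sub_one_sub_conj_mul {a z : ℂ} (hnum : z - a ≠ 0)
    (hden : 1 - conj a * z ≠ 0) :
    logDeriv (fun z => (z - a) / (1 - conj a * z)) z = 1 / (z - a) + conj a / (1 - conj a * z) := by
  rw [logDeriv_div (f := fun z => z - a) (g := fun z => 1 - conj a * z) z hnum hden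
    (by fun_prop) (by fun_prop)]
  simp [logDeriv_apply]
  ring

theorem mul_logDeriv_blaschke (ha : ∀ i ∈ s, ‖a i‖ < 1) (hlam : lam ≠ 0) {z : ℂ}
    (hz : ‖z‖ = 1) :
    z * logDeriv (blaschke lam s a) z =
      1 + ∑ i ∈ s, (((1 - ‖a i‖ ^ 2) / ‖z - a i‖ ^ 2 : ℝ) : ℂ) := by
  have hz0 : z ≠ 0 := by rintro rfl; simp at hz
  have hnum : ∀ i ∈ s, z - a i ≠ 0 := fun i hi h => by
    rw [sub_eq_zero.mp h] at hz
    exact (ha i hi).ne hz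
  have hden : ∀ i ∈ s, 1 - conj (a i) * z ≠ 0 := fun i hi h => by
    have := one_lt_norm_of_eval_blaschkeDen_eq_zero ha
      (by rw [eval_blaschkeDen]; exact prod_eq_zero hi h)
    linarith
  have hdiff : ∀ i ∈ s, DifferentiableAt ℂ (fun z => (z - a i) / (1 - conj (a i) * z)) z :=
    fun i hi => by fun_prop (disch := exact hden i hi)
  have hprod : logDeriv (fun z => ∏ i ∈ s, (z - a i) / (1 - conj (a i) * z)) z =
      ∑ i ∈ s, (1 / (z - a i) + conj (a i) / (1 - conj (a i) * z)) := by
    rw [logDeriv_prod (f := fun i z => (z - a i) / (1 - conj (a i) * z))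
      (fun i hi => div_ne_zero (hnum i hi) (hden i hi)) hdiff]
    exact sum_congr rfl fun i hi => logDeriv_div_sub_one_sub_conj_mul (hnum i hi) (hden i hi)
  have hlin : logDeriv (fun z => lam * z) z = 1 / z := by
    rw [logDeriv_const_mul z lam hlam, logDeriv_id']
  change z * logDeriv (fun z => lam * z * ∏ i ∈ s, (z - a i) / (1 - conj (a i) * z)) z = _
  rw [logDeriv_mul z (mul_ne_zero hlam hz0) (prod_ne_zero_iff.mpr fun i hi =>
    div_ne_zero (hnum i hi) (hden i hi)) (by fun_prop) (.fun_finsetProd hdiff), hlin, hprod,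
    mul_add, mul_one_div_cancel hz0, mul_sum]
  push_cast
  congr 1
  refine sum_congr rfl fun i _ => ?_
  have := Complex.div_sub_add_mul_conj_div_one_sub_conj_mul (a := a i) hz
  push_cast at this
  rw [← this]
  ring

theorem deriv_blaschke_ne_zero (ha : ∀ i ∈ s, ‖a i‖ < 1) (hlam : lam ≠ 0) {z : ℂ}
    (hz : ‖z‖ = 1) : deriv (blaschke lam s a) z ≠ 0 := by
  intro h
  have hlog := mul_logDeriv_blaschke ha hlam hz
  rw [logDeriv_apply, h, zero_div, mul_zero] at hlog
  have hpos : 0 < 1 + ∑ i ∈ s, (1 - ‖a i‖ ^ 2) / ‖z - a i‖ ^ 2 := by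
    have : 0 ≤ ∑ i ∈ s, (1 - ‖a i‖ ^ 2) / ‖z - a i‖ ^ 2 := sum_nonneg fun i hi =>
      div_nonneg (by nlinarith [ha i hi, norm_nonneg (a i)]) (sq_nonneg _)
    linarith
  exact hpos.ne' (by exact_mod_cast hlog.symm)

theorem hasDerivAt_blaschke {z : ℂ} (hden : (blaschkeDen s a).eval z ≠ 0) :
    HasDerivAt (blaschke lam s a)
      (((X * blaschkeNum lam s a).derivative.eval z * (blaschkeDen s a).eval z -
        (X * blaschkeNum lam s a).eval z * (blaschkeDen s a).derivative.eval z) /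
          (blaschkeDen s a).eval z ^ 2) z := by
  have : blaschke lam s a =
      fun z => (X * blaschkeNum lam s a).eval z / (blaschkeDen s a).eval z :=
    funext fun z => by rw [blaschke_eq_div, eval_mul, eval_X]
  rw [this]
  exact ((X * blaschkeNum lam s a).hasDerivAt z).div ((blaschkeDen s a).hasDerivAt z) hden

theorem deriv_blaschke_of_blaschke_eq {w z : ℂ} (hw : w ≠ 0) (h : blaschke lam s a z = w) :
    deriv (blaschke lam s a) z =
      (blaschkeLevel lam s a w).derivative.eval z / (blaschkeDen s a).eval z := by
  have hden := eval_blaschkeDen_ne_zero_of_blaschke_ne_zero (h ▸ hw)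
  rw [blaschke_eq_div, div_eq_iff hden] at h
  rw [(hasDerivAt_blaschke hden).deriv, blaschkeLevel]
  simp only [derivative_sub, derivative_C_mul, eval_sub, eval_mul, eval_C, eval_X, h]
  field_simp

theorem blaschke_div_mul_deriv_of_blaschke_eq {w z : ℂ} (hw : w ≠ 0)
    (h : blaschke lam s a z = w) :
    blaschke lam s a z / (z * deriv (blaschke lam s a) z) =
      (blaschkeNum lam s a).eval z / (blaschkeLevel lam s a w).derivative.eval z := by
  have hden := eval_blaschkeDen_ne_zero_of_blaschke_ne_zero (h ▸ hw)
  have hz0 : z ≠ 0 := by rintro rfl; simp [blaschke, eq_comm, hw] at h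
  rw [deriv_blaschke_of_blaschke_eq hw h]
  rcases eq_or_ne ((blaschkeLevel lam s a w).derivative.eval z) 0 with hF | hF
  · simp [hF]
  rw [blaschke_eq_div] at h ⊢
  rw [div_eq_iff hden] at h
  field_simp

theorem eval_derivative_blaschkeLevel_ne_zero (ha : ∀ i ∈ s, ‖a i‖ < 1) (hlam : ‖lam‖ = 1)
    {w : ℂ} (hw : ‖w‖ = 1) {z : ℂ} (hz : z ∈ (blaschkeLevel lam s a w).roots) :
    (blaschkeLevel lam s a w).derivative.eval z ≠ 0 := by
  have hlam0 : lam ≠ 0 := norm_ne_zero_iff.mp (hlam ▸ one_ne_zero)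
  have hw0 : w ≠ 0 := norm_ne_zero_iff.mp (hw ▸ one_ne_zero)
  have h := (mem_roots_blaschkeLevel_iff ha hlam0 hw0).mp hz
  have hderiv :=
    deriv_blaschke_ne_zero ha hlam0 (norm_eq_one_of_norm_blaschke_eq_one ha hlam (h ▸ hw))
  rw [deriv_blaschke_of_blaschke_eq hw0 h] at hderiv
  exact left_ne_zero_of_mul (by simpa [div_eq_mul_inv] using hderiv)

theorem sum_blaschke_div_mul_deriv (ha : ∀ i ∈ s, ‖a i‖ < 1) (hlam : ‖lam‖ = 1) {w : ℂ}
    (hw : ‖w‖ = 1) :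
    ∑ z ∈ (blaschkeLevel lam s a w).roots.toFinset,
      blaschke lam s a z / (z * deriv (blaschke lam s a) z) = 1 := by
  have hlam0 : lam ≠ 0 := norm_ne_zero_iff.mp (hlam ▸ one_ne_zero)
  have hw0 : w ≠ 0 := norm_ne_zero_iff.mp (hw ▸ one_ne_zero)
  set F := blaschkeLevel lam s a w
  have hdeg : (blaschkeNum lam s a).degree < F.natDegree := by
    rw [natDegree_blaschkeLevel hlam0, degree_eq_natDegree (blaschkeNum_ne_zero hlam0),
      natDegree_blaschkeNum hlam0]
    exact_mod_cast Nat.lt_succ_self #s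
  calc _ = ∑ z ∈ F.roots.toFinset, (blaschkeNum lam s a).eval z / F.derivative.eval z :=
        sum_congr rfl fun z hz => blaschke_div_mul_deriv_of_blaschke_eq hw0
          ((mem_roots_blaschkeLevel_iff ha hlam0 hw0).mp (Multiset.mem_toFinset.mp hz))
    _ = (blaschkeNum lam s a).coeff (F.natDegree - 1) / F.leadingCoeff :=
        sum_roots_eval_div_eval_derivative (IsAlgClosed.splits F)
          (nodup_roots_of_eval_derivative_ne_zero fun z hz =>
            eval_derivative_blaschkeLevel_ne_zero ha hlam hw hz) hdeg
    _ = 1 := by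
      rw [natDegree_blaschkeLevel hlam0, leadingCoeff_blaschkeLevel hlam0, Nat.add_sub_cancel,
        ← natDegree_blaschkeNum (a := a) hlam0, ← leadingCoeff, leadingCoeff_blaschkeNum,
        div_self hlam0]

theorem blaschke_transfer_unital_general
    (n : ℕ) (zs : ℕ → ℂ)
    (hzs : ∀ k ∈ Finset.Ico 1 n, ‖zs k‖ < 1)
    (lam : ℂ) (hlam : ‖lam‖ = 1) (R : ℂ → ℂ)
    (hR : ∀ z : ℂ, R z = lam * z * ∏ k ∈ Finset.Ico 1 n,
      (z - zs k) / (1 - (starRingEnd ℂ) (zs k) * z)) :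
    ∀ w : ℂ, ‖w‖ = 1 → ∀ S : Finset ℂ, (∀ z : ℂ, z ∈ S ↔ R z = w) →
      ∑ z ∈ S, R z / (z * deriv R z) = 1 := by
  intro w hw S hS
  obtain rfl : R = blaschke lam (Finset.Ico 1 n) zs := funext hR
  have hroots : S = (blaschkeLevel lam (Finset.Ico 1 n) zs w).roots.toFinset := by
    ext z
    rw [hS, Multiset.mem_toFinset, mem_roots_blaschkeLevel_iff hzs
      (norm_ne_zero_iff.mp (hlam ▸ one_ne_zero)) (norm_ne_zero_iff.mp (hw ▸ one_ne_zero))]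
  rw [hroots]
  exact sum_blaschke_div_mul_deriv hzs hlam hw

/-- For every `w` on the unit circle,
`∑_{z ∈ R⁻¹(w)} R(z)/(z R'(z)) = 1`, where `R⁻¹(w)` is the set of the `n` distinct
solutions on the circle of `R(z) = w`; that is, the transfer operator satisfies
`𝓛_R(1) = 1`. -/
theorem blaschke_transfer_unital
    (n : ℕ) (hn : 2 ≤ n) (zs : ℕ → ℂ)
    (hzs : ∀ k ∈ Finset.Ico 1 n, ‖zs k‖ < 1)
    (lam : ℂ) (hlam : ‖lam‖ = 1) (R : ℂ → ℂ)
    (hR : ∀ z : ℂ, R z = lam * z * ∏ k ∈ Finset.Ico 1 n,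
      (z - zs k) / (1 - (starRingEnd ℂ) (zs k) * z)) :
    ∀ w : ℂ, ‖w‖ = 1 → ∀ S : Finset ℂ, (∀ z : ℂ, z ∈ S ↔ R z = w) →
      ∑ z ∈ S, R z / (z * deriv R z) = 1 :=
  blaschke_transfer_unital_general n zs hzs lam hlam R hR
end

section
/- If f ∈ H²(𝕋), then the composition f ∘ (R|_𝕋) also belongs to H²(𝕋) and ‖f ∘ R‖₂ = ‖f‖₂; that is, the composition operator C_R : f ↦ f ∘ R is an isometry of H²(𝕋) into itself. -/
open MeasureTheory

/-- The normalized Lebesgue (Haar) measure on the unit circle `𝕋 ⊆ ℂ`, realized as the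
pushforward of normalized Lebesgue measure on `(0, 2π]` under `θ ↦ e^{iθ}`. -/
noncomputable def circleHaar : Measure ℂ :=
  (ENNReal.ofReal (2 * Real.pi))⁻¹ •
    (MeasureTheory.volume.restrict (Set.Ioc (0 : ℝ) (2 * Real.pi))).map
      (fun θ : ℝ => Complex.exp (θ * Complex.I))

/-- `f` belongs to the Hardy space `H²(𝕋)`: it is in `L²` of the circle and its Fourier
coefficients `f̂(k) = ∫ f(z) z^{-k} dm(z)` vanish for all `k < 0`. -/
def InH2 (f : ℂ → ℂ) : Prop :=
  MemLp f 2 circleHaar ∧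
    ∀ k : ℤ, k < 0 → ∫ z, f z * z ^ (-k).toNat ∂circleHaar = 0

/-!
A finite Blaschke product `φ` is continuous on the closed unit disc and holomorphic inside, with
`φ 0 = 0` and `|φ| = 1` on the circle. By the mean value property `∫ φ^k dm = φ(0)^k = 0` for
`k ≥ 1`, and on the circle `φ^{-k} = conj (φ^k)`, so the pushforward of `m` under `φ` has the
Fourier coefficients of `m`, hence is `m`: composition with `φ` is an isometry of `L²(m)`. It
preserves `H²`: for an analytic polynomial `p` and `k ≥ 1`, again `∫ p(φ z) z^k dm = 0`; partial
Fourier sums of `f ∈ H²` are such polynomials and converge to `f` in `L²`, and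
`|∫ (f - p)(φ z) z^k dm| ≤ ‖(f - p) ∘ φ‖₁ ≤ ‖f - p‖₂`.
-/

section

open AddCircle Complex ComplexConjugate Metric Real
open scoped ENNReal

instance : Fact (0 < 2 * π) := ⟨two_pi_pos⟩

noncomputable section

def toUnitCircle (x : AddCircle (2 * π)) : ℂ := x.toCircle

lemma toUnitCircle_coe (θ : ℝ) : toUnitCircle θ = circleMap 0 1 θ := by
  simp [toUnitCircle, AddCircle.toCircle_apply_mk, circleMap, Circle.coe_exp]

lemma fourier_apply_eq_toUnitCircle_zpow (n : ℤ) (x : AddCircle (2 * π)) :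
    fourier n x = toUnitCircle x ^ n := by
  simp [toUnitCircle, AddCircle.toCircle_zsmul]

lemma continuous_toUnitCircle : Continuous toUnitCircle :=
  continuous_subtype_val.comp AddCircle.continuous_toCircle

lemma measurableEmbedding_toUnitCircle : MeasurableEmbedding toUnitCircle :=
  (continuous_toUnitCircle.isClosedEmbedding <| Subtype.val_injective.comp <|
    AddCircle.injective_toCircle two_pi_pos.ne').measurableEmbedding

lemma norm_toUnitCircle (x : AddCircle (2 * π)) : ‖toUnitCircle x‖ = 1 :=
  Circle.norm_coe _

lemma circleHaar_eq_map_toUnitCircle :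
    circleHaar = haarAddCircle.map toUnitCircle := by
  have hmk : (volume.restrict (Set.Ioc 0 (2 * π))).map ((↑) : ℝ → AddCircle (2 * π)) = volume := by
    simpa using (AddCircle.measurePreserving_mk (2 * π) 0).map_eq
  have hexp : (fun θ : ℝ => exp (θ * I)) = toUnitCircle ∘ ((↑) : ℝ → AddCircle (2 * π)) := by
    funext θ
    simp [toUnitCircle_coe, circleMap]
  rw [circleHaar, hexp, ← Measure.map_map continuous_toUnitCircle.measurable
    AddCircle.measurable_mk', hmk, AddCircle.volume_eq_smul_haarAddCircle, Measure.map_smul,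
    smul_smul, ENNReal.inv_mul_cancel (by positivity) ENNReal.ofReal_ne_top, one_smul]

instance : IsProbabilityMeasure circleHaar := by
  rw [circleHaar_eq_map_toUnitCircle]
  exact Measure.isProbabilityMeasure_map continuous_toUnitCircle.aemeasurable

lemma integral_circleHaar (g : ℂ → ℂ) :
    ∫ z, g z ∂circleHaar = ∫ x, g (toUnitCircle x) ∂haarAddCircle := by
  rw [circleHaar_eq_map_toUnitCircle, measurableEmbedding_toUnitCircle.integral_map]

lemma ae_circleHaar_norm_eq_one : ∀ᵐ z ∂circleHaar, ‖z‖ = 1 := by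
  rw [circleHaar_eq_map_toUnitCircle, measurableEmbedding_toUnitCircle.ae_map_iff]
  exact .of_forall norm_toUnitCircle

lemma integral_circleHaar_eq_circleAverage (g : ℂ → ℂ) :
    ∫ z, g z ∂circleHaar = circleAverage g 0 1 := by
  rw [integral_circleHaar, AddCircle.integral_haarAddCircle, Real.circleAverage_def,
    ← AddCircle.intervalIntegral_preimage (2 * π) 0, zero_add]
  simp_rw [toUnitCircle_coe]

lemma DiffContOnCl.integral_circleHaar {g : ℂ → ℂ} (hg : DiffContOnCl ℂ g (ball 0 1)) :
    ∫ z, g z ∂circleHaar = g 0 := by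
  rw [integral_circleHaar_eq_circleAverage]
  exact DiffContOnCl.circleAverage (R := 1) (by simpa using hg)

def argAddCircle (w : ℂ) : AddCircle (2 * π) := (arg w : ℝ)

lemma measurable_argAddCircle : Measurable argAddCircle :=
  AddCircle.measurable_mk'.comp measurable_arg

lemma toUnitCircle_argAddCircle {w : ℂ} (hw : ‖w‖ = 1) : toUnitCircle (argAddCircle w) = w := by
  have := norm_mul_exp_arg_mul_I w
  rw [hw] at this
  simpa [argAddCircle, toUnitCircle_coe, circleMap] using this

lemma AddCircle.measure_ext_of_integral_fourier {T : ℝ} [Fact (0 < T)]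
    {ν₁ ν₂ : Measure (AddCircle T)} [IsFiniteMeasure ν₁] [IsFiniteMeasure ν₂]
    (h : ∀ n : ℤ, ∫ x, fourier n x ∂ν₁ = ∫ x, fourier n x ∂ν₂) : ν₁ = ν₂ := by
  have hint (ν : Measure (AddCircle T)) [IsFiniteMeasure ν] (g : C(AddCircle T, ℂ)) :
      Integrable g ν :=
    (BoundedContinuousFunction.mkOfCompact g).integrable ν
  have hspan : ∀ g ∈ Submodule.span ℂ (Set.range (fourier (T := T))),
      ∫ x, g x ∂ν₁ = ∫ x, g x ∂ν₂ := by
    intro g hg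
    induction hg using Submodule.span_induction with
    | mem g hg => obtain ⟨n, rfl⟩ := hg; exact h n
    | zero => simp
    | add g₁ g₂ _ _ h₁ h₂ =>
      simp only [ContinuousMap.coe_add, Pi.add_apply]
      rw [integral_add (hint ν₁ g₁) (hint ν₁ g₂), integral_add (hint ν₂ g₁) (hint ν₂ g₂), h₁, h₂]
    | smul c g _ hg =>
      simp only [ContinuousMap.coe_smul, Pi.smul_apply, integral_smul, hg]
  refine ext_of_forall_mem_subalgebra_integral_eq_of_polish (𝕜 := ℂ)
    (A := fourierSubalgebra.comap (BoundedContinuousFunction.toContinuousMapStarₐ ℂ)) ?_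
    fun g hg => hspan _ (fourierSubalgebra_coe (T := T) ▸ hg)
  intro x y hxy
  obtain ⟨_, ⟨g, hg, rfl⟩, hne⟩ := fourierSubalgebra_separatesPoints hxy
  exact ⟨g, ⟨g, ⟨BoundedContinuousFunction.mkOfCompact g, hg, rfl⟩, rfl⟩, hne⟩

lemma zpow_eq_conj_zpow_neg {w : ℂ} (hw : ‖w‖ = 1) (n : ℤ) : w ^ n = conj (w ^ (-n)) := by
  rw [map_zpow₀, ← RCLike.inv_eq_conj hw, inv_zpow', neg_neg]

lemma map_toUnitCircle_map_argAddCircle {μ : Measure ℂ} (hμ : ∀ᵐ w ∂μ, ‖w‖ = 1) :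
    (μ.map argAddCircle).map toUnitCircle = μ := by
  have hid : toUnitCircle ∘ argAddCircle =ᵐ[μ] id :=
    hμ.mono fun w hw => toUnitCircle_argAddCircle hw
  rw [Measure.map_map continuous_toUnitCircle.measurable measurable_argAddCircle,
    Measure.map_congr hid, Measure.map_id]

lemma measure_ext_of_integral_zpow {μ₁ μ₂ : Measure ℂ} [IsFiniteMeasure μ₁] [IsFiniteMeasure μ₂]
    (h₁ : ∀ᵐ w ∂μ₁, ‖w‖ = 1) (h₂ : ∀ᵐ w ∂μ₂, ‖w‖ = 1)
    (h : ∀ n : ℤ, ∫ w, w ^ n ∂μ₁ = ∫ w, w ^ n ∂μ₂) : μ₁ = μ₂ := by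
  have hfourier {μ : Measure ℂ} (hμ : ∀ᵐ w ∂μ, ‖w‖ = 1) (n : ℤ) :
      ∫ x, fourier n x ∂μ.map argAddCircle = ∫ w, w ^ n ∂μ := by
    rw [integral_map measurable_argAddCircle.aemeasurable
      (fourier n).continuous.aestronglyMeasurable]
    refine integral_congr_ae (hμ.mono fun w hw => ?_)
    change fourier n (argAddCircle w) = w ^ n
    rw [fourier_apply_eq_toUnitCircle_zpow, toUnitCircle_argAddCircle hw]
  rw [← map_toUnitCircle_map_argAddCircle h₁, ← map_toUnitCircle_map_argAddCircle h₂]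
  congr 1
  exact AddCircle.measure_ext_of_integral_fourier fun n => by rw [hfourier h₁, hfourier h₂, h]

lemma integral_zpow_of_integral_pow_eq_zero {μ : Measure ℂ} [IsProbabilityMeasure μ]
    (hμ : ∀ᵐ w ∂μ, ‖w‖ = 1) (h : ∀ k : ℕ, 0 < k → ∫ w, w ^ k ∂μ = 0) (n : ℤ) :
    ∫ w, w ^ n ∂μ = if n = 0 then 1 else 0 := by
  obtain ⟨k, rfl | rfl⟩ := n.eq_nat_or_neg
  · rcases k.eq_zero_or_pos with rfl | hk
    · simp
    · simpa [hk.ne'] using h k hk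
  · rcases k.eq_zero_or_pos with rfl | hk
    · simp
    · rw [integral_congr_ae (hμ.mono fun w hw => zpow_eq_conj_zpow_neg hw _), integral_conj]
      simpa [hk.ne'] using h k hk

lemma integral_circleHaar_pow {k : ℕ} (hk : 0 < k) : ∫ z, z ^ k ∂circleHaar = 0 := by
  rw [(differentiable_pow k).diffContOnCl.integral_circleHaar, zero_pow hk.ne']

lemma eq_circleHaar_of_integral_pow_eq_zero {μ : Measure ℂ} [IsProbabilityMeasure μ]
    (hμ : ∀ᵐ w ∂μ, ‖w‖ = 1) (h : ∀ k : ℕ, 0 < k → ∫ w, w ^ k ∂μ = 0) : μ = circleHaar :=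
  measure_ext_of_integral_zpow hμ ae_circleHaar_norm_eq_one fun n => by
    rw [integral_zpow_of_integral_pow_eq_zero hμ h,
      integral_zpow_of_integral_pow_eq_zero ae_circleHaar_norm_eq_one
        (fun _ => integral_circleHaar_pow)]

theorem measurePreserving_circleHaar_of_diffContOnCl {φ : ℂ → ℂ} (hφ : Measurable φ)
    (hd : DiffContOnCl ℂ φ (ball 0 1)) (h0 : φ 0 = 0) (hsphere : ∀ z, ‖z‖ = 1 → ‖φ z‖ = 1) :
    MeasurePreserving φ circleHaar circleHaar := by
  refine ⟨hφ, ?_⟩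
  have := Measure.isProbabilityMeasure_map (μ := circleHaar) hφ.aemeasurable
  refine eq_circleHaar_of_integral_pow_eq_zero ?_ fun k hk => ?_
  · rw [ae_map_iff hφ.aemeasurable (measurableSet_eq_fun (by fun_prop) (by fun_prop))]
    exact ae_circleHaar_norm_eq_one.mono hsphere
  · have hdk : DiffContOnCl ℂ (fun z => φ z ^ k) (ball 0 1) :=
      (differentiable_pow k).comp_diffContOnCl hd
    rw [integral_map hφ.aemeasurable (by fun_prop), hdk.integral_circleHaar, h0, zero_pow hk.ne']

lemma MeasureTheory.MemLp.exists_eLpNorm_sub_sum_fourier_lt {T : ℝ} [Fact (0 < T)]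
    {F : AddCircle T → ℂ} (hF : MemLp F 2 AddCircle.haarAddCircle) {ε : ℝ≥0∞} (hε : 0 < ε) :
    ∃ s : Finset ℤ, eLpNorm (fun x => F x - ∑ n ∈ s, fourierCoeff F n * fourier n x) 2
      AddCircle.haarAddCircle < ε := by
  have hsum := hasSum_fourier_series_L2 (hF.toLp F)
  rw [fourierCoeff_congr_ae hF.coeFn_toLp] at hsum
  obtain ⟨s, hs⟩ := (hsum.eventually (eball_mem_nhds _ hε)).exists
  refine ⟨s, lt_of_eq_of_lt ?_ hs⟩
  have hcoe : ∑ n ∈ s, fourierCoeff F n • fourierLp (T := T) 2 n =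
      ContinuousMap.toLp 2 AddCircle.haarAddCircle ℂ (∑ n ∈ s, fourierCoeff F n • fourier n) := by
    simp [map_sum]
  rw [Lp.edist_def, hcoe, eLpNorm_sub_comm]
  refine eLpNorm_congr_ae ?_
  filter_upwards [hF.coeFn_toLp, ContinuousMap.coeFn_toLp (p := 2) (𝕜 := ℂ)
    AddCircle.haarAddCircle (∑ n ∈ s, fourierCoeff F n • fourier n)] with x hx hsx
  rw [Pi.sub_apply, hx, hsx]
  simp

lemma fourierCoeff_comp_toUnitCircle (f : ℂ → ℂ) (n : ℤ) :
    fourierCoeff (f ∘ toUnitCircle) n = ∫ z, f z * z ^ (-n) ∂circleHaar := by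
  simp only [fourierCoeff, integral_circleHaar, fourier_apply_eq_toUnitCircle_zpow,
    Function.comp_apply, smul_eq_mul, mul_comm]

lemma InH2.exists_eLpNorm_sub_eval_lt {f : ℂ → ℂ} (hf : InH2 f) {ε : ℝ≥0∞} (hε : 0 < ε) :
    ∃ p : Polynomial ℂ, eLpNorm (fun z => f z - p.eval z) 2 circleHaar < ε := by
  have hF : MemLp (f ∘ toUnitCircle) 2 haarAddCircle := by
    rw [← measurableEmbedding_toUnitCircle.memLp_map_measure_iff, ← circleHaar_eq_map_toUnitCircle]
    exact hf.1
  have hneg (n : ℤ) (hn : n < 0) : fourierCoeff (f ∘ toUnitCircle) n = 0 := by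
    rw [fourierCoeff_comp_toUnitCircle, ← hf.2 n hn]
    congr 1
    funext z
    rw [← zpow_natCast, Int.toNat_of_nonneg (by omega)]
  obtain ⟨s, hs⟩ := hF.exists_eLpNorm_sub_sum_fourier_lt hε
  refine ⟨∑ n ∈ s, .C (fourierCoeff (f ∘ toUnitCircle) n) * .X ^ n.toNat, lt_of_eq_of_lt ?_ hs⟩
  rw [circleHaar_eq_map_toUnitCircle, measurableEmbedding_toUnitCircle.eLpNorm_map_measure]
  congr 1
  funext x
  simp only [Function.comp_apply, Polynomial.eval_finsetSum, Polynomial.eval_mul,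
    Polynomial.eval_C, Polynomial.eval_pow, Polynomial.eval_X, fourier_apply_eq_toUnitCircle_zpow]
  congr 1
  refine Finset.sum_congr rfl fun n _ => ?_
  rcases lt_or_ge n 0 with hn | hn
  · simp [hneg n hn]
  · rw [← zpow_natCast, Int.toNat_of_nonneg hn]

lemma Continuous.memLp_circleHaar {g : ℂ → ℂ} (hg : Continuous g) {p : ℝ≥0∞} :
    MemLp g p circleHaar := by
  rw [circleHaar_eq_map_toUnitCircle, measurableEmbedding_toUnitCircle.memLp_map_measure_iff]
  exact (BoundedContinuousFunction.mkOfCompact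
    ⟨g ∘ toUnitCircle, hg.comp continuous_toUnitCircle⟩).memLp_top.mono_exponent le_top

lemma enorm_integral_comp_mul_le {α β : Type*} [MeasurableSpace α] [MeasurableSpace β]
    {μ : Measure α} {ν : Measure β} [IsProbabilityMeasure μ] {φ : α → β}
    (hφ : MeasurePreserving φ μ ν) {h : β → ℂ} (hh : AEStronglyMeasurable h ν) {w : α → ℂ}
    (hw : ∀ᵐ x ∂μ, ‖w x‖ ≤ 1) :
    ‖∫ x, h (φ x) * w x ∂μ‖ₑ ≤ eLpNorm h 2 ν :=
  calc ‖∫ x, h (φ x) * w x ∂μ‖ₑ ≤ ∫⁻ x, ‖h (φ x) * w x‖ₑ ∂μ := enorm_integral_le_lintegral_enorm _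
    _ ≤ ∫⁻ x, ‖h (φ x)‖ₑ ∂μ := lintegral_mono_ae <| hw.mono fun x hx => by
        rw [enorm_mul]
        exact mul_le_of_le_one_right' (by simpa [← ofReal_norm] using hx)
    _ = eLpNorm (h ∘ φ) 1 μ := eLpNorm_one_eq_lintegral_enorm.symm
    _ ≤ eLpNorm (h ∘ φ) 2 μ :=
        eLpNorm_le_eLpNorm_of_exponent_le one_le_two (hh.comp_measurePreserving hφ)
    _ = eLpNorm h 2 ν := eLpNorm_comp_measurePreserving hh hφ

section Composition

variable {φ : ℂ → ℂ}

lemma integrable_comp_mul_pow (hφ : MeasurePreserving φ circleHaar circleHaar) {g : ℂ → ℂ}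
    (hg : MemLp g 2 circleHaar) (m : ℕ) :
    Integrable (fun z => g (φ z) * z ^ m) circleHaar :=
  ((hg.comp_measurePreserving hφ).integrable one_le_two).mul_bdd (by fun_prop)
    (ae_circleHaar_norm_eq_one.mono fun z hz => by rw [norm_pow, hz, one_pow])

lemma InH2.integral_comp_mul_pow_eq_zero {f : ℂ → ℂ} (hf : InH2 f)
    (hφ : MeasurePreserving φ circleHaar circleHaar) (hd : DiffContOnCl ℂ φ (ball 0 1))
    {m : ℕ} (hm : 0 < m) : ∫ z, f (φ z) * z ^ m ∂circleHaar = 0 := by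
  by_contra hne
  obtain ⟨p, hp⟩ := hf.exists_eLpNorm_sub_eval_lt (enorm_pos.mpr hne)
  have hpφ : ∫ z, p.eval (φ z) * z ^ m ∂circleHaar = 0 := by
    have : DiffContOnCl ℂ (fun z => p.eval (φ z) * z ^ m) (ball 0 1) :=
      (p.differentiable.comp_diffContOnCl hd).smul (differentiable_pow m).diffContOnCl
    rw [this.integral_circleHaar, zero_pow hm.ne', mul_zero]
  have hsplit : ∫ z, f (φ z) * z ^ m ∂circleHaar =
      ∫ z, (f (φ z) - p.eval (φ z)) * z ^ m ∂circleHaar := by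
    simp_rw [sub_mul]
    rw [integral_sub (integrable_comp_mul_pow hφ hf.1 m)
      (integrable_comp_mul_pow hφ p.continuous.memLp_circleHaar m), hpφ, sub_zero]
  refine (hp.trans_le ?_).false
  rw [hsplit]
  exact enorm_integral_comp_mul_le hφ (h := fun z => f z - p.eval z)
    (hf.1.aestronglyMeasurable.sub p.continuous.aestronglyMeasurable)
    (ae_circleHaar_norm_eq_one.mono fun z hz => by rw [norm_pow, hz, one_pow])

lemma InH2.comp_of_measurePreserving (hφ : MeasurePreserving φ circleHaar circleHaar)
    (hd : DiffContOnCl ℂ φ (ball 0 1)) {f : ℂ → ℂ} (hf : InH2 f) : InH2 (fun z => f (φ z)) :=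
  ⟨hf.1.comp_measurePreserving hφ, fun k hk => hf.integral_comp_mul_pow_eq_zero hφ hd (by omega)⟩

end Composition

def finiteBlaschke {ι : Type*} (lam : ℂ) (s : Finset ι) (a : ι → ℂ) (z : ℂ) : ℂ :=
  lam * z * ∏ k ∈ s, (z - a k) / (1 - conj (a k) * z)

lemma one_sub_conj_mul_ne_zero {a z : ℂ} (ha : ‖a‖ < 1) (hz : ‖z‖ ≤ 1) : 1 - conj a * z ≠ 0 := by
  intro h
  have hnorm : ‖conj a * z‖ = 1 := by rw [← sub_eq_zero.mp h, norm_one]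
  rw [norm_mul, RCLike.norm_conj] at hnorm
  nlinarith [norm_nonneg a, norm_nonneg z]

lemma norm_sub_div_one_sub_conj_mul {a z : ℂ} (ha : ‖a‖ < 1) (hz : ‖z‖ = 1) :
    ‖(z - a) / (1 - conj a * z)‖ = 1 := by
  have hden : 1 - conj a * z = conj (z - a) * z := by
    rw [map_sub, sub_mul, conj_mul', hz]
    simp
  have hza : ‖z - a‖ ≠ 0 := by
    rw [norm_ne_zero_iff, sub_ne_zero]
    rintro rfl
    exact ha.ne hz
  rw [hden, norm_div, norm_mul, RCLike.norm_conj, hz, mul_one, div_self hza]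

section FiniteBlaschke

variable {ι : Type*} {lam : ℂ} {s : Finset ι} {a : ι → ℂ}

lemma norm_finiteBlaschke (hlam : ‖lam‖ = 1) (ha : ∀ k ∈ s, ‖a k‖ < 1) {z : ℂ} (hz : ‖z‖ = 1) :
    ‖finiteBlaschke lam s a z‖ = 1 := by
  rw [finiteBlaschke, norm_mul, norm_mul, hlam, hz, norm_prod,
    Finset.prod_eq_one fun k hk => norm_sub_div_one_sub_conj_mul (ha k hk) hz, mul_one, mul_one]

lemma diffContOnCl_finiteBlaschke (ha : ∀ k ∈ s, ‖a k‖ < 1) :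
    DiffContOnCl ℂ (finiteBlaschke lam s a) (ball 0 1) := by
  refine DifferentiableOn.diffContOnCl fun z hz => ?_
  rw [closure_ball 0 one_ne_zero, mem_closedBall_zero_iff] at hz
  refine (((differentiableAt_const lam).mul differentiableAt_id).mul ?_).differentiableWithinAt
  refine DifferentiableAt.fun_finsetProd fun k hk => ?_
  exact (differentiableAt_id.sub_const _).div (by fun_prop) (one_sub_conj_mul_ne_zero (ha k hk) hz)

lemma measurable_finiteBlaschke : Measurable (finiteBlaschke lam s a) := by
  unfold finiteBlaschke
  fun_prop

theorem measurePreserving_finiteBlaschke (hlam : ‖lam‖ = 1) (ha : ∀ k ∈ s, ‖a k‖ < 1) :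
    MeasurePreserving (finiteBlaschke lam s a) circleHaar circleHaar :=
  measurePreserving_circleHaar_of_diffContOnCl measurable_finiteBlaschke
    (diffContOnCl_finiteBlaschke ha) (by simp [finiteBlaschke])
    fun _ hz => norm_finiteBlaschke hlam ha hz

end FiniteBlaschke

end

end

theorem blaschke_composition_isometry_H2_general
    (n : ℕ) (zs : ℕ → ℂ)
    (hzs : ∀ k ∈ Finset.Ico 1 n, ‖zs k‖ < 1)
    (lam : ℂ) (hlam : ‖lam‖ = 1) (R : ℂ → ℂ)
    (hR : ∀ z : ℂ, R z = lam * z * ∏ k ∈ Finset.Ico 1 n,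
      (z - zs k) / (1 - (starRingEnd ℂ) (zs k) * z)) :
    ∀ f : ℂ → ℂ, InH2 f →
      InH2 (fun z => f (R z))
        ∧ eLpNorm (fun z => f (R z)) 2 circleHaar = eLpNorm f 2 circleHaar := by
  obtain rfl : R = finiteBlaschke lam (Finset.Ico 1 n) zs := funext hR
  have hmp := measurePreserving_finiteBlaschke hlam hzs
  intro f hf
  exact ⟨hf.comp_of_measurePreserving hmp (diffContOnCl_finiteBlaschke hzs),
    eLpNorm_comp_measurePreserving hf.1.aestronglyMeasurable hmp⟩

/-- If `f ∈ H²(𝕋)`, then `f ∘ R` also belongs to `H²(𝕋)` and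
`‖f ∘ R‖₂ = ‖f‖₂`; that is, the composition operator `C_R : f ↦ f ∘ R` is an isometry of
`H²(𝕋)` into itself. -/
theorem blaschke_composition_isometry_H2
    (n : ℕ) (hn : 2 ≤ n) (zs : ℕ → ℂ)
    (hzs : ∀ k ∈ Finset.Ico 1 n, ‖zs k‖ < 1)
    (lam : ℂ) (hlam : ‖lam‖ = 1) (R : ℂ → ℂ)
    (hR : ∀ z : ℂ, R z = lam * z * ∏ k ∈ Finset.Ico 1 n,
      (z - zs k) / (1 - (starRingEnd ℂ) (zs k) * z)) :
    ∀ f : ℂ → ℂ, InH2 f →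
      InH2 (fun z => f (R z))
        ∧ eLpNorm (fun z => f (R z)) 2 circleHaar = eLpNorm f 2 circleHaar :=
  blaschke_composition_isometry_H2_general n zs hzs lam hlam R hR
end
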